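/- arXiv:2203.04536 — 2 statements merged into one kernel-verified Lean document; each statement's English description precedes it below -/
import Mathlib

section
/- For every predictor class P ⊆ [0,1]^X, every distinguisher class D ⊆ [−1,1]^X, every distribution μ over X, every advantage bound ε > 0, and every failure probability bound δ ∈ (0,1), the sample complexity of distribution-specific realizable OI satisfies SAMP-DS-R(P,D,ε,δ,μ) ≥ log( (1 − δ) · N_{μ,D}(P, 2ε) ). Equivalently: if there exists an n-sample learner that for every target p* ∈ P, given n i.i.d. examples from μ_{p*}, outputs a predictor p with ‖p − p*‖_{μ,D} ≤ ε with probability at least 1 − δ, then 2^n ≥ (1 − δ) · N_{μ,D}(P, 2ε). -/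
/-!
Take a maximal `2ε`-separated subset `S` of `P`; maximality makes it a `2ε`-cover, so
`N_{μ,D}(P, 2ε) ≤ |S|`. By the triangle inequality for `‖·‖_{μ,D}`, the success events
`{p | ‖p - p*‖_{μ,D} ≤ ε}` for the targets `p* ∈ S` are pairwise disjoint. Whatever the target,
a labelled sample of size `n` is at most `2^n` times as likely as under fair-coin labels, so every
output law of the learner is dominated by `2^n` times one fixed law `ν`. Hence
`(1 - δ) |S| ≤ ∑_{p* ∈ S} Pr_{p*}[success] ≤ 2^n ∑_{p* ∈ S} ν(success for p*) ≤ 2^n`; this bound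
on the size of separated sets is also what makes a maximal one exist.
-/

open scoped ENNReal Pointwise

noncomputable section

namespace OI

/-- Expectation of a real-valued function under a probability mass function. -/
def pexp {α : Type*} (q : PMF α) (f : α → ℝ) : ℝ := ∑' a, (q a).toReal * f a

/-- Inner product of two functions w.r.t. the distribution `μ`. -/
def inn {X : Type*} (μ : PMF X) (f g : X → ℝ) : ℝ := pexp μ fun x => f x * g x

/-- Dual Minkowski (semi)norm of `f` w.r.t. the class `F`. -/
def dnorm {X : Type*} (μ : PMF X) (F : Set (X → ℝ)) (f : X → ℝ) : ℝ :=
  sSup ((fun g => |inn μ f g|) '' F)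

/-- `C` is an ε-covering of `G` w.r.t. the seminorm defined by `F`. -/
def IsCover {X : Type*} (μ : PMF X) (F G : Set (X → ℝ)) (ε : ℝ) (C : Set (X → ℝ)) : Prop :=
  C ⊆ G ∧ ∀ g ∈ G, ∃ c ∈ C, dnorm μ F (g - c) ≤ ε

/-- Covering number `N_{μ,F}(G, ε)` (`⊤` if no finite covering exists). -/
def covN {X : Type*} (μ : PMF X) (F G : Set (X → ℝ)) (ε : ℝ) : ℕ∞ :=
  ⨅ (C : Set (X → ℝ)) (_ : IsCover μ F G ε C), C.encard

/-- Base-2 logarithm of an extended natural number (junk value on `⊤`). -/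
def elog2 (N : ℕ∞) : ℝ := Real.logb 2 (N.toNat : ℝ)

/-- Bernoulli distribution on `Bool` with mean (the truncation to `[0,1]` of) `r`. -/
def bern (r : ℝ) : PMF Bool := PMF.bernoulli (min (Real.toNNReal r) 1) (min_le_right _ _)

/-- The distribution `μ_p` of individual-outcome pairs. -/
def exDist {X : Type*} (μ : PMF X) (p : X → ℝ) : PMF (X × Bool) :=
  μ.bind fun x => (bern (p x)).map fun o => (x, o)

/-- `n` i.i.d. samples from `q`. -/
def iid {α : Type*} (q : PMF α) : (n : ℕ) → PMF (Fin n → α)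
  | 0 => PMF.pure Fin.elim0
  | n + 1 => (iid q n).bind fun v => q.map fun a => Fin.cons a v

/-- Probability of an event under a PMF. -/
def prob {α : Type*} (q : PMF α) (E : Set α) : ℝ≥0∞ := q.toOuterMeasure E

/-- A (possibly randomized) `n`-sample learner. -/
abbrev Learner (X : Type*) (n : ℕ) := (Fin n → X × Bool) → PMF (X → ℝ)

/-- Distribution of the learner output on `n` i.i.d. samples from `μ_{p*}`. -/
def outDist {X : Type*} (μ : PMF X) (pstar : X → ℝ) {n : ℕ} (A : Learner X n) :
    PMF (X → ℝ) :=
  (iid (exDist μ pstar) n).bind A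

/-- `p` is a predictor, i.e. takes values in `[0,1]`. -/
def Predictor {X : Type*} (p : X → ℝ) : Prop := ∀ x, p x ∈ Set.Icc (0 : ℝ) 1

/-- `d` takes values in `[-1,1]`. -/
def Dist1 {X : Type*} (d : X → ℝ) : Prop := ∀ x, d x ∈ Set.Icc (-1 : ℝ) 1

/-- The class `[0,1]^X` of all predictors. -/
def allPred (X : Type*) : Set (X → ℝ) := {p | Predictor p}

/-- The learner `A` succeeds for target `pstar`: with probability at least `1 - δ` it outputs
a predictor whose maximum distinguishing advantage w.r.t. `pstar` over `D` is at most `ε`. -/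
def Achieves {X : Type*} (μ : PMF X) (D : Set (X → ℝ)) (ε δ : ℝ) (pstar : X → ℝ) {n : ℕ}
    (A : Learner X n) : Prop :=
  ENNReal.ofReal (1 - δ) ≤
    prob (outDist μ pstar A) {p | Predictor p ∧ dnorm μ D (p - pstar) ≤ ε}

/-- The agnostic benchmark `inf_{p' ∈ P} ‖p' - pstar‖_{μ,D}`. -/
def agTarget {X : Type*} (μ : PMF X) (P D : Set (X → ℝ)) (pstar : X → ℝ) : ℝ :=
  sInf ((fun p' => dnorm μ D (p' - pstar)) '' P)

/-- The learner `A` succeeds agnostically for target `pstar`. -/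
def AchievesAg {X : Type*} (μ : PMF X) (P D : Set (X → ℝ)) (ε δ : ℝ) (pstar : X → ℝ) {n : ℕ}
    (A : Learner X n) : Prop :=
  ENNReal.ofReal (1 - δ) ≤
    prob (outDist μ pstar A)
      {p | Predictor p ∧ dnorm μ D (p - pstar) ≤ agTarget μ P D pstar + ε}

/-- Distribution-specific realizable OI learner. -/
def DSRL {X : Type*} (μ : PMF X) (P D : Set (X → ℝ)) (ε δ : ℝ) (n : ℕ)
    (A : Learner X n) : Prop :=
  ∀ pstar ∈ P, Achieves μ D ε δ pstar A

/-- Distribution-specific agnostic OI learner. -/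
def DSAL {X : Type*} (μ : PMF X) (P D : Set (X → ℝ)) (ε δ : ℝ) (n : ℕ)
    (A : Learner X n) : Prop :=
  ∀ pstar : X → ℝ, Predictor pstar → AchievesAg μ P D ε δ pstar A

/-- Distribution-free realizable OI learner. -/
def DFRL {X : Type*} (P D : Set (X → ℝ)) (ε δ : ℝ) (n : ℕ) (A : Learner X n) : Prop :=
  ∀ μ : PMF X, DSRL μ P D ε δ n A

/-- Distribution-free agnostic OI learner. -/
def DFAL {X : Type*} (P D : Set (X → ℝ)) (ε δ : ℝ) (n : ℕ) (A : Learner X n) : Prop :=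
  ∀ μ : PMF X, DSAL μ P D ε δ n A

/-- Sample complexity of distribution-specific realizable OI. -/
def SAMPDSR {X : Type*} (μ : PMF X) (P D : Set (X → ℝ)) (ε δ : ℝ) : ℕ∞ :=
  ⨅ (n : ℕ) (_ : ∃ A : Learner X n, DSRL μ P D ε δ n A), (n : ℕ∞)

/-- Sample complexity of distribution-specific agnostic OI. -/
def SAMPDSA {X : Type*} (μ : PMF X) (P D : Set (X → ℝ)) (ε δ : ℝ) : ℕ∞ :=
  ⨅ (n : ℕ) (_ : ∃ A : Learner X n, DSAL μ P D ε δ n A), (n : ℕ∞)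

/-- Sample complexity of distribution-free realizable OI. -/
def SAMPDFR {X : Type*} (P D : Set (X → ℝ)) (ε δ : ℝ) : ℕ∞ :=
  ⨅ (n : ℕ) (_ : ∃ A : Learner X n, DFRL P D ε δ n A), (n : ℕ∞)

/-- Sample complexity of distribution-free agnostic OI. -/
def SAMPDFA {X : Type*} (P D : Set (X → ℝ)) (ε δ : ℝ) : ℕ∞ :=
  ⨅ (n : ℕ) (_ : ∃ A : Learner X n, DFAL P D ε δ n A), (n : ℕ∞)

/-- The points `x 0, …, x (n-1)` are `γ`-fat shattered by `F`. -/
def Shatters {X : Type*} (F : Set (X → ℝ)) (γ : ℝ) {n : ℕ} (x : Fin n → X) : Prop :=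
  ∃ r : Fin n → ℝ, ∀ b : Fin n → Bool, ∃ f ∈ F,
    ∀ i, γ ≤ (if b i then (1 : ℝ) else -1) * (f (x i) - r i)

/-- The `γ`-fat-shattering dimension of `F`. -/
def fatDim {X : Type*} (F : Set (X → ℝ)) (γ : ℝ) : ℕ∞ :=
  ⨆ (n : ℕ) (_ : ∃ x : Fin n → X, Shatters F γ x), (n : ℕ∞)

end OI


open OI

namespace PMF

variable {α β ι : Type*}

theorem bind_map_prodMk_apply (μ : PMF α) (κ : α → PMF β) (a : α) (b : β) :
    (μ.bind fun x => (κ x).map (Prod.mk x)) (a, b) = μ a * κ a b := by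
  rw [bind_apply, tsum_eq_single a fun x hx => ?_, map_apply, tsum_eq_single b fun y hy => ?_]
  · simp
  · simp [Ne.symm hy]
  · simp [map_apply, Ne.symm hx]

theorem toOuterMeasure_bind_le_mul {q r : PMF α} {c : ℝ≥0∞} (h : ∀ a, q a ≤ c * r a)
    (f : α → PMF β) (s : Set β) :
    (q.bind f).toOuterMeasure s ≤ c * (r.bind f).toOuterMeasure s := by
  simp only [toOuterMeasure_bind_apply, ← ENNReal.tsum_mul_left, ← mul_assoc]
  exact ENNReal.tsum_le_tsum fun a => mul_le_mul_left (h a) _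

theorem sum_toOuterMeasure_le_one (q : PMF α) (S : Finset ι) {s : ι → Set α}
    (hs : (S : Set ι).PairwiseDisjoint s) : ∑ i ∈ S, q.toOuterMeasure (s i) ≤ 1 :=
  calc ∑ i ∈ S, q.toOuterMeasure (s i) = q.toOuterMeasure (⋃ i ∈ S, s i) := by
        simp only [toOuterMeasure_apply, Finset.indicator_biUnion_apply S s hs]
        exact (Summable.tsum_finsetSum fun _ _ => ENNReal.summable).symm
    _ ≤ q.toOuterMeasure Set.univ := q.toOuterMeasure.mono (Set.subset_univ _)
    _ = 1 := by simp [toOuterMeasure_apply]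

theorem hasSum_toReal_one (q : PMF α) : HasSum (fun a => (q a).toReal) 1 := by
  simpa [← ENNReal.tsum_toReal_eq q.apply_ne_top] using ENNReal.hasSum_toReal q.tsum_coe_ne_top

theorem norm_toReal_mul_le (q : PMF α) {h : α → ℝ} {C : ℝ} (hC : ∀ a, |h a| ≤ C) (a : α) :
    ‖(q a).toReal * h a‖ ≤ (q a).toReal * C := by
  rw [Real.norm_eq_abs, abs_mul, ENNReal.abs_toReal]
  exact mul_le_mul_of_nonneg_left (hC a) ENNReal.toReal_nonneg

end PMF

namespace OI

variable {X α : Type*}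

section Seminorm

theorem abs_pexp_le (q : PMF α) {h : α → ℝ} {C : ℝ} (hC : ∀ a, |h a| ≤ C) : |pexp q h| ≤ C :=
  tsum_of_norm_bounded (f := fun a => (q a).toReal * h a)
    (by simpa using (q.hasSum_toReal_one).mul_right C) (q.norm_toReal_mul_le hC)

theorem summable_toReal_mul (q : PMF α) {h : α → ℝ} {C : ℝ} (hC : ∀ a, |h a| ≤ C) :
    Summable fun a => (q a).toReal * h a :=
  (q.hasSum_toReal_one.mul_right C).summable.of_norm_bounded (q.norm_toReal_mul_le hC)

theorem Dist1.abs_mul_le {d : X → ℝ} (hd : Dist1 d) {f : X → ℝ} {C : ℝ} (hf : ∀ x, |f x| ≤ C)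
    (x : X) : |f x * d x| ≤ C := by
  rw [abs_mul]
  exact (mul_le_of_le_one_right (abs_nonneg _) (abs_le.2 (hd x))).trans (hf x)

theorem Predictor.abs_sub_le_one {p q : X → ℝ} (hp : Predictor p) (hq : Predictor q) (x : X) :
    |(p - q) x| ≤ 1 := by
  rw [Pi.sub_apply, abs_sub_le_iff]
  constructor <;> linarith [(hp x).1, (hp x).2, (hq x).1, (hq x).2]

variable (μ : PMF X) (F : Set (X → ℝ))

theorem inn_neg_left (f g : X → ℝ) : inn μ (-f) g = -inn μ f g := by
  simp only [inn, pexp, Pi.neg_apply, neg_mul, mul_neg, tsum_neg]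

theorem inn_add_left {f g d : X → ℝ} {Cf Cg : ℝ} (hf : ∀ x, |f x| ≤ Cf) (hg : ∀ x, |g x| ≤ Cg)
    (hd : Dist1 d) : inn μ (f + g) d = inn μ f d + inn μ g d := by
  simp only [inn, pexp, Pi.add_apply, add_mul, mul_add]
  exact (summable_toReal_mul μ (hd.abs_mul_le hf)).tsum_add
    (summable_toReal_mul μ (hd.abs_mul_le hg))

theorem dnorm_nonneg (f : X → ℝ) : 0 ≤ dnorm μ F f :=
  Real.sSup_nonneg (by rintro _ ⟨g, -, rfl⟩; exact abs_nonneg _)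

theorem dnorm_zero : dnorm μ F 0 = 0 :=
  le_antisymm (Real.sSup_le (by rintro _ ⟨g, -, rfl⟩; simp [inn, pexp]) le_rfl)
    (dnorm_nonneg μ F 0)

theorem dnorm_sub_comm (f g : X → ℝ) : dnorm μ F (f - g) = dnorm μ F (g - f) := by
  simp only [dnorm, ← neg_sub g f, inn_neg_left, abs_neg]

variable {μ F}

theorem abs_inn_le_dnorm (hF : ∀ d ∈ F, Dist1 d) {f d : X → ℝ} {C : ℝ} (hf : ∀ x, |f x| ≤ C)
    (hd : d ∈ F) : |inn μ f d| ≤ dnorm μ F f :=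
  le_csSup ⟨C, by rintro _ ⟨d', hd', rfl⟩; exact abs_pexp_le μ ((hF d' hd').abs_mul_le hf)⟩
    (Set.mem_image_of_mem _ hd)

theorem dnorm_add_le (hF : ∀ d ∈ F, Dist1 d) {f g : X → ℝ} {Cf Cg : ℝ} (hf : ∀ x, |f x| ≤ Cf)
    (hg : ∀ x, |g x| ≤ Cg) : dnorm μ F (f + g) ≤ dnorm μ F f + dnorm μ F g := by
  refine Real.sSup_le ?_ (add_nonneg (dnorm_nonneg μ F f) (dnorm_nonneg μ F g))
  rintro _ ⟨d, hd, rfl⟩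
  dsimp only
  rw [inn_add_left μ hf hg (hF d hd)]
  exact (abs_add_le _ _).trans
    (add_le_add (abs_inn_le_dnorm hF hf hd) (abs_inn_le_dnorm hF hg hd))

end Seminorm

section Sampling

theorem iid_apply (q : PMF α) (n : ℕ) (t : Fin n → α) : iid q n t = ∏ i, q (t i) := by
  induction n with
  | zero => simp [iid, Subsingleton.elim t Fin.elim0]
  | succ n ih =>
    rw [iid, PMF.bind_apply, tsum_eq_single (Fin.tail t) fun v hv => ?_, PMF.map_apply,
      tsum_eq_single (t 0) fun a ha => ?_, ih, Fin.prod_univ_succ, Fin.cons_self_tail]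
    · simp [mul_comm, Fin.tail]
    · exact if_neg fun h => ha (by rw [h, Fin.cons_zero])
    · rw [PMF.map_apply, ENNReal.tsum_eq_zero.mpr fun a => if_neg fun h => hv (by
        rw [h, Fin.tail_cons]), mul_zero]

theorem iid_le_pow_mul_iid {q r : PMF α} {c : ℝ≥0∞} (h : ∀ a, q a ≤ c * r a) (n : ℕ)
    (t : Fin n → α) : iid q n t ≤ c ^ n * iid r n t := by
  rw [iid_apply, iid_apply]
  calc ∏ i, q (t i) ≤ ∏ i, c * r (t i) := Finset.prod_le_prod' fun i _ => h (t i)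
    _ = c ^ n * ∏ i, r (t i) := by simp [Finset.prod_mul_distrib]

def fairCoinDist (μ : PMF X) : PMF (X × Bool) :=
  μ.bind fun x => (PMF.uniformOfFintype Bool).map (Prod.mk x)

theorem exDist_apply (μ : PMF X) (p : X → ℝ) (x : X) (o : Bool) :
    exDist μ p (x, o) = μ x * bern (p x) o :=
  PMF.bind_map_prodMk_apply _ _ x o

theorem exDist_le_two_mul_fairCoinDist (μ : PMF X) (p : X → ℝ) (z : X × Bool) :
    exDist μ p z ≤ 2 * fairCoinDist μ z := by
  obtain ⟨x, o⟩ := z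
  rw [exDist_apply, fairCoinDist, PMF.bind_map_prodMk_apply, PMF.uniformOfFintype_apply,
    Fintype.card_bool, Nat.cast_ofNat, mul_left_comm,
    ENNReal.mul_inv_cancel two_ne_zero ENNReal.ofNat_ne_top, mul_one]
  exact mul_le_of_le_one_right' (PMF.coe_le_one _ _)

theorem prob_outDist_le (μ : PMF X) (p : X → ℝ) {n : ℕ} (A : Learner X n) (s : Set (X → ℝ)) :
    prob (outDist μ p A) s ≤ 2 ^ n * prob ((iid (fairCoinDist μ) n).bind A) s :=
  PMF.toOuterMeasure_bind_le_mul (iid_le_pow_mul_iid (exDist_le_two_mul_fairCoinDist μ p) n) A s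

theorem mul_card_le_two_pow (μ : PMF X) {n : ℕ} (A : Learner X n) (S : Finset (X → ℝ))
    {s : (X → ℝ) → Set (X → ℝ)} (hs : (S : Set (X → ℝ)).PairwiseDisjoint s) {a : ℝ≥0∞}
    (ha : ∀ p ∈ S, a ≤ prob (outDist μ p A) (s p)) : a * S.card ≤ 2 ^ n :=
  calc a * S.card = ∑ _p ∈ S, a := by rw [Finset.sum_const, nsmul_eq_mul, mul_comm]
    _ ≤ ∑ p ∈ S, 2 ^ n * prob ((iid (fairCoinDist μ) n).bind A) (s p) :=
        Finset.sum_le_sum fun p hp => (ha p hp).trans (prob_outDist_le μ p A (s p))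
    _ = 2 ^ n * ∑ p ∈ S, prob ((iid (fairCoinDist μ) n).bind A) (s p) :=
        (Finset.mul_sum ..).symm
    _ ≤ 2 ^ n * 1 := by gcongr; exact PMF.sum_toOuterMeasure_le_one _ S hs
    _ = 2 ^ n := mul_one _

end Sampling

section Packing

def successSet (μ : PMF X) (D : Set (X → ℝ)) (ε : ℝ) (p : X → ℝ) : Set (X → ℝ) :=
  {g | Predictor g ∧ dnorm μ D (g - p) ≤ ε}

theorem pairwiseDisjoint_successSet {μ : PMF X} {D : Set (X → ℝ)} (hD : ∀ d ∈ D, Dist1 d)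
    {ε : ℝ} {S : Set (X → ℝ)} (hS : ∀ p ∈ S, Predictor p)
    (hsep : S.Pairwise fun p q => 2 * ε < dnorm μ D (p - q)) :
    S.PairwiseDisjoint (successSet μ D ε) := by
  intro p hp q hq hpq
  rw [Function.onFun, Set.disjoint_left]
  rintro g ⟨hg, hgp⟩ ⟨-, hgq⟩
  have htri := dnorm_add_le (μ := μ) hD ((hS p hp).abs_sub_le_one hg)
    (hg.abs_sub_le_one (hS q hq))
  rw [sub_add_sub_cancel, dnorm_sub_comm μ D p g] at htri
  linarith [hsep hp hq hpq]

def IsPacking (μ : PMF X) (F G : Set (X → ℝ)) (r : ℝ) (S : Finset (X → ℝ)) : Prop :=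
  ↑S ⊆ G ∧ (S : Set (X → ℝ)).Pairwise fun p q => r < dnorm μ F (p - q)

variable {μ : PMF X} {F G : Set (X → ℝ)} {r : ℝ}

theorem IsPacking.exists_card_lt (hr : 0 ≤ r) {S : Finset (X → ℝ)} (hS : IsPacking μ F G r S)
    (hcover : ¬IsCover μ F G r S) : ∃ S', IsPacking μ F G r S' ∧ S.card < S'.card := by
  classical
  obtain ⟨g, hg, hfar⟩ : ∃ g ∈ G, ∀ c ∈ S, r < dnorm μ F (g - c) := by
    simpa [IsCover, hS.1] using hcover
  have hgS : g ∉ S := fun hgS => by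
    have := hfar g hgS
    rw [sub_self, dnorm_zero] at this
    linarith
  refine ⟨insert g S, ⟨?_, ?_⟩, by rw [Finset.card_insert_of_notMem hgS]; omega⟩
  · rw [Finset.coe_insert]
    exact Set.insert_subset hg hS.1
  · rw [Finset.coe_insert, Set.pairwise_insert]
    exact ⟨hS.2, fun c hc _ => ⟨hfar c hc, dnorm_sub_comm μ F c g ▸ hfar c hc⟩⟩

theorem exists_isPacking_isCover (hr : 0 ≤ r) {K : ℕ}
    (hK : ∀ S, IsPacking μ F G r S → S.card ≤ K) :
    ∃ S, IsPacking μ F G r S ∧ IsCover μ F G r S := by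
  by_contra! hnot
  have hlarge : ∀ k : ℕ, ∃ S, IsPacking μ F G r S ∧ k ≤ S.card := by
    intro k
    induction k with
    | zero => exact ⟨∅, by simp [IsPacking], le_rfl⟩
    | succ k ih =>
      obtain ⟨S, hS, hk⟩ := ih
      obtain ⟨S', hS', hlt⟩ := hS.exists_card_lt hr (hnot S hS)
      exact ⟨S', hS', by omega⟩
  obtain ⟨S, hS, hk⟩ := hlarge (K + 1)
  linarith [hK S hS]

theorem covN_le_card {S : Finset (X → ℝ)} (h : IsCover μ F G r S) : covN μ F G r ≤ S.card :=
  (iInf₂_le _ h).trans_eq (Set.encard_coe_eq_coe_finsetCard S)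

theorem ofReal_mul_card_le_of_isPacking {P D : Set (X → ℝ)} (hP : ∀ p ∈ P, Predictor p)
    (hD : ∀ d ∈ D, Dist1 d) {ε δ : ℝ} {n : ℕ} {A : Learner X n} (hA : DSRL μ P D ε δ n A)
    {S : Finset (X → ℝ)} (hS : IsPacking μ D P (2 * ε) S) :
    ENNReal.ofReal (1 - δ) * S.card ≤ 2 ^ n :=
  mul_card_le_two_pow μ A S (pairwiseDisjoint_successSet hD (fun p hp => hP p (hS.1 hp)) hS.2)
    fun p hp => hA p (hS.1 hp)

end Packing

end OI

theorem statement_2_general {X : Type} (μ : PMF X) (P D : Set (X → ℝ))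
    (hP : ∀ p ∈ P, Predictor p)
    (hD : ∀ d ∈ D, Dist1 d)
    (ε δ : ℝ) (hε : 0 < ε) (hδ : δ ∈ Set.Ioo (0 : ℝ) 1)
    (n : ℕ) (A : Learner X n) (hA : DSRL μ P D ε δ n A) :
    ENNReal.ofReal (1 - δ) * (covN μ D P (2 * ε) : ℝ≥0∞) ≤ 2 ^ n := by
  have hδ' : ENNReal.ofReal (1 - δ) ≠ 0 := (ENNReal.ofReal_pos.2 (by linarith [hδ.2])).ne'
  obtain ⟨K, hK⟩ := ENNReal.exists_nat_gt (r := 2 ^ n / ENNReal.ofReal (1 - δ))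
    (ENNReal.div_lt_top (by simp) hδ').ne
  have hcard : ∀ S, IsPacking μ D P (2 * ε) S → S.card ≤ K := fun S hS => by
    have := ofReal_mul_card_le_of_isPacking hP hD hA hS
    rw [mul_comm, ← ENNReal.le_div_iff_mul_le (Or.inl hδ') (Or.inl ENNReal.ofReal_ne_top)] at this
    exact_mod_cast (this.trans_lt hK).le
  obtain ⟨S, hS, hcover⟩ := exists_isPacking_isCover (by positivity) hcard
  calc ENNReal.ofReal (1 - δ) * (covN μ D P (2 * ε) : ℝ≥0∞)
      ≤ ENNReal.ofReal (1 - δ) * S.card := by gcongr; exact_mod_cast covN_le_card hcover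
    _ ≤ 2 ^ n := ofReal_mul_card_le_of_isPacking hP hD hA hS

/-- sample complexity lower bound for distribution-specific realizable OI:
if an `n`-sample learner succeeds (with advantage `ε` and failure probability `δ`) for every
target in `P`, then `2^n ≥ (1 − δ) · N_{μ,D}(P, 2ε)`. -/
theorem statement_2 {X : Type} [Nonempty X] (μ : PMF X) (P D : Set (X → ℝ))
    (hPne : P.Nonempty) (hP : ∀ p ∈ P, Predictor p)
    (hDne : D.Nonempty) (hD : ∀ d ∈ D, Dist1 d)
    (ε δ : ℝ) (hε : 0 < ε) (hδ : δ ∈ Set.Ioo (0 : ℝ) 1)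
    (n : ℕ) (A : Learner X n) (hA : DSRL μ P D ε δ n A) :
    ENNReal.ofReal (1 - δ) * (covN μ D P (2 * ε) : ℝ≥0∞) ≤ 2 ^ n :=
  statement_2_general μ P D hP hD ε δ hε hδ n A hA
end
end

section
/- Let D ⊆ [−1,1]^X be a distinguisher class and ε > 0. If x₁,…,x_n ∈ X are 6ε-fat shattered by D, and μ is the uniform distribution over {x₁,…,x_n}, then log N_{μ,D}([0,1]^X, ε) ≥ n/8. -/
open scoped ENNReal Pointwise

noncomputable section

open OI

open Finset

/-!
Fat shattering lets two distinguishers follow the sign pattern of any `q` on the points `x i`,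
so `‖q‖_{μ,D} ≤ ε` forces `∑ i, |q (x i)| ≤ n / 6`. Hence an element of an `ε`-cover can cover at
most `(65/18)^n` of the `4^n` predictors with values in `{0, 1/3, 2/3, 1}` on the points: ranking
the four levels by their distance to the centre, the `k`-th one is at distance at least `k/6`,
and Rankin's trick with weight `(2/3)^rank` counts the ℓ¹-ball. So every cover has at least
`(72/65)^n ≥ 2^(n/8)` elements; a fine grid gives a finite cover, so `covN` is finite and attained.
-/

namespace OI

variable {X : Type*}

theorem covN_le_encard {μ : PMF X} {F G : Set (X → ℝ)} {ε : ℝ} {C : Set (X → ℝ)}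
    (hC : IsCover μ F G ε C) : covN μ F G ε ≤ C.encard :=
  iInf₂_le C hC

theorem exists_isCover_encard_eq_covN {μ : PMF X} {F G : Set (X → ℝ)} {ε : ℝ}
    (h : ∃ C, IsCover μ F G ε C) : ∃ C, IsCover μ F G ε C ∧ C.encard = covN μ F G ε := by
  have : Nonempty {C // IsCover μ F G ε C} := h.elim fun C hC => ⟨⟨C, hC⟩⟩
  obtain ⟨⟨C, hC⟩, hCmin⟩ := ciInf_mem fun C : {C // IsCover μ F G ε C} => C.1.encard
  exact ⟨C, hC, by rw [covN, iInf_subtype']; exact hCmin⟩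

theorem pexp_uniformOfFinset (s : Finset X) (hs : s.Nonempty) (f : X → ℝ) :
    pexp (PMF.uniformOfFinset s hs) f = (∑ a ∈ s, f a) / #s := by
  rw [pexp, tsum_eq_sum (s := s) fun a ha => by simp [PMF.uniformOfFinset_apply_of_notMem hs ha],
    sum_div]
  refine sum_congr rfl fun a ha => ?_
  rw [PMF.uniformOfFinset_apply_of_mem hs ha, ENNReal.toReal_inv, ENNReal.toReal_natCast,
    inv_mul_eq_div]

theorem Shatters.injective {F : Set (X → ℝ)} {γ : ℝ} (hγ : 0 < γ) {n : ℕ} {x : Fin n → X}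
    (hx : Shatters F γ x) : Function.Injective x := by
  obtain ⟨r, hr⟩ := hx
  intro i j hij
  by_contra hne
  obtain ⟨f, -, hf⟩ := hr fun k => decide (k = i)
  obtain ⟨g, -, hg⟩ := hr fun k => decide (k = j)
  have hfi := hf i
  have hfj := hf j
  have hgi := hg i
  have hgj := hg j
  simp only [decide_true, decide_eq_true_eq, if_true, if_neg hne, if_neg (Ne.symm hne)]
    at hfi hfj hgi hgj
  rw [hij] at hfi hgi
  linarith

theorem card_filter_sum_le_le_prod_sum_div {ι α : Type*} [Fintype ι] [DecidableEq ι] [Fintype α]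
    (w : ι → α → ℕ) (N : ℕ) {r : ℝ} (hr0 : 0 < r) (hr1 : r ≤ 1) :
    (#{v : ι → α | ∑ i, w i (v i) ≤ N} : ℝ) ≤ (∏ i, ∑ a, r ^ w i a) / r ^ N := by
  have hone {v : ι → α} (hv : ∑ i, w i (v i) ≤ N) : (1 : ℝ) ≤ (∏ i, r ^ w i (v i)) / r ^ N := by
    rw [prod_pow_eq_pow_sum, one_le_div (by positivity)]
    exact pow_le_pow_of_le_one hr0.le hr1 hv
  rw [Fintype.prod_sum, sum_div, ← nsmul_one, ← sum_const]
  refine (sum_le_sum fun v hv => hone (mem_filter.1 hv).2).trans ?_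
  exact sum_le_sum_of_subset_of_nonneg (filter_subset _ _) fun _ _ _ => by positivity

theorem exists_injective_rank_le_dist (c : ℝ) : ∃ ℓ : Fin 4 → Fin 4, Function.Injective ℓ ∧
    ∀ j : Fin 4, ((ℓ j : ℕ) : ℝ) / 6 ≤ |((j : ℕ) : ℝ) / 3 - c| := by
  refine ⟨if c < 1/6 then ![0, 1, 2, 3] else if c < 1/3 then ![1, 0, 2, 3]
    else if c < 1/2 then ![2, 0, 1, 3] else if c < 2/3 then ![3, 1, 0, 2]
    else if c < 5/6 then ![3, 2, 0, 1] else ![3, 2, 1, 0], ?_, fun j => ?_⟩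
  · split_ifs <;> decide
  · split_ifs <;> fin_cases j <;> norm_num <;> rw [le_abs] <;>
      first | (left; linarith) | (right; linarith)

theorem card_filter_sum_abs_sub_le {n : ℕ} (c : Fin n → ℝ) :
    (#{v : Fin n → Fin 4 | ∑ i, |((v i : ℕ) : ℝ) / 3 - c i| ≤ n / 6} : ℝ) ≤ (65 / 18) ^ n := by
  choose ℓ hℓ hℓc using fun i => exists_injective_rank_le_dist (c i)
  have hsub : ({v : Fin n → Fin 4 | ∑ i, |((v i : ℕ) : ℝ) / 3 - c i| ≤ n / 6} : Finset _) ⊆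
      ({v : Fin n → Fin 4 | ∑ i, (ℓ i (v i) : ℕ) ≤ n} : Finset _) := by
    intro v hv
    simp only [mem_filter, mem_univ, true_and] at hv ⊢
    have : ∑ i, ((ℓ i (v i) : ℕ) : ℝ) / 6 ≤ n / 6 :=
      (sum_le_sum fun i _ => hℓc i (v i)).trans hv
    rw [← sum_div, div_le_div_iff_of_pos_right (by norm_num)] at this
    exact_mod_cast this
  have hrank (i : Fin n) : ∑ a, (2 / 3 : ℝ) ^ (ℓ i a : ℕ) = 65 / 27 := by
    rw [(hℓ i).bijective_of_finite.sum_comp fun k : Fin 4 => (2 / 3 : ℝ) ^ (k : ℕ),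
      Fin.sum_univ_four]
    norm_num
  calc _ ≤ (#{v : Fin n → Fin 4 | ∑ i, (ℓ i (v i) : ℕ) ≤ n} : ℝ) := by
        exact_mod_cast card_le_card hsub
    _ ≤ (∏ i, ∑ a, (2 / 3 : ℝ) ^ (ℓ i a : ℕ)) / (2 / 3) ^ n :=
        card_filter_sum_le_le_prod_sum_div (fun i a => (ℓ i a : ℕ)) n (by norm_num) (by norm_num)
    _ = (65 / 18) ^ n := by rw [prod_congr rfl fun i _ => hrank i, prod_const, card_univ,
          Fintype.card_fin, ← div_pow]; norm_num


theorem extend_mem_allPred {α : Type*} (f : α → X) {g : α → ℝ} (hg : ∀ a, g a ∈ Set.Icc 0 1) :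
    Function.extend f g 0 ∈ allPred X := by
  classical
  intro y
  rw [Function.extend_def]
  split_ifs
  exacts [hg _, ⟨le_rfl, zero_le_one⟩]

theorem abs_sub_natFloor_mul_div_le {p m : ℝ} (hp : 0 ≤ p) (hm : 0 < m) :
    |p - ⌊p * m⌋₊ / m| ≤ 1 / m := by
  have hlo : (⌊p * m⌋₊ : ℝ) ≤ p * m := Nat.floor_le (by positivity)
  have hhi : p * m < ⌊p * m⌋₊ + 1 := Nat.lt_floor_add_one _
  rw [show p - ⌊p * m⌋₊ / m = (p * m - ⌊p * m⌋₊) / m by field_simp, abs_div, abs_of_pos hm,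
    abs_of_nonneg (by linarith)]
  gcongr
  linarith

section UniformImage

variable [DecidableEq X] {n : ℕ} {x : Fin n → X} (hinj : Function.Injective x)
  (hne : (univ.image x).Nonempty)
include hinj

theorem inn_uniformOfFinset_image (f g : X → ℝ) :
    inn (PMF.uniformOfFinset (univ.image x) hne) f g = (∑ i, f (x i) * g (x i)) / n := by
  rw [inn, pexp_uniformOfFinset, sum_image hinj.injOn, card_image_of_injective _ hinj, card_univ,
    Fintype.card_fin]

theorem abs_inn_uniformOfFinset_image_le {d : X → ℝ} (hd : Dist1 d) (q : X → ℝ) :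
    |inn (PMF.uniformOfFinset (univ.image x) hne) q d| ≤ (∑ i, |q (x i)|) / n := by
  rw [inn_uniformOfFinset_image hinj, abs_div, Nat.abs_cast]
  gcongr
  refine (abs_sum_le_sum_abs _ _).trans (sum_le_sum fun i _ => ?_)
  rw [abs_mul]
  exact mul_le_of_le_one_right (abs_nonneg _) (abs_le.2 (hd (x i)))

theorem dnorm_uniformOfFinset_image_le {D : Set (X → ℝ)} (hD : ∀ d ∈ D, Dist1 d) (q : X → ℝ) :
    dnorm (PMF.uniformOfFinset (univ.image x) hne) D q ≤ (∑ i, |q (x i)|) / n :=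
  Real.sSup_le
    (by rintro _ ⟨d, hd, rfl⟩; exact abs_inn_uniformOfFinset_image_le hinj hne (hD d hd) q)
    (by positivity)

theorem Shatters.mul_sum_abs_le_of_dnorm_le {D : Set (X → ℝ)} (hD : ∀ d ∈ D, Dist1 d)
    {γ ε : ℝ} (hx : Shatters D γ x) {q : X → ℝ}
    (hq : dnorm (PMF.uniformOfFinset (univ.image x) hne) D q ≤ ε) :
    γ * ∑ i, |q (x i)| ≤ n * ε := by
  set μ := PMF.uniformOfFinset (univ.image x) hne
  have hbdd : BddAbove ((fun g => |inn μ q g|) '' D) :=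
    ⟨_, by rintro _ ⟨d, hd, rfl⟩; exact abs_inn_uniformOfFinset_image_le hinj hne (hD d hd) q⟩
  have hle {d : X → ℝ} (hd : d ∈ D) : |inn μ q d| ≤ ε := (le_csSup hbdd ⟨d, hd, rfl⟩).trans hq
  obtain ⟨r, hr⟩ := hx
  obtain ⟨dp, hdpD, hdp⟩ := hr fun i => decide (0 ≤ q (x i))
  obtain ⟨dm, hdmD, hdm⟩ := hr fun i => !decide (0 ≤ q (x i))
  -- `dp - dm` has the sign of `q (x i)` and size at least `2γ` at every point
  have hpoint (i : Fin n) : 2 * γ * |q (x i)| ≤ q (x i) * dp (x i) - q (x i) * dm (x i) := by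
    have hp := hdp i
    have hm := hdm i
    by_cases h : 0 ≤ q (x i)
    · simp only [h, decide_true, Bool.not_true, if_true, Bool.false_eq_true, if_false] at hp hm
      rw [abs_of_nonneg h]
      nlinarith
    · simp only [h, decide_false, Bool.not_false, if_true, Bool.false_eq_true, if_false] at hp hm
      rw [abs_of_neg (not_le.1 h)]
      nlinarith
  have hsum : 2 * γ * ∑ i, |q (x i)| ≤ n * inn μ q dp - n * inn μ q dm := by
    rcases n.eq_zero_or_pos with rfl | hn
    · simp
    simp only [μ, inn_uniformOfFinset_image hinj, mul_div_cancel₀ _ (by positivity : (n : ℝ) ≠ 0),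
      ← sum_sub_distrib, mul_sum]
    exact sum_le_sum fun i _ => hpoint i
  have hp := (le_abs_self _).trans (hle hdpD)
  have hm := (neg_le_abs _).trans (hle hdmD)
  have hn : (0 : ℝ) ≤ n := n.cast_nonneg
  nlinarith

theorem exists_finset_isCover {D : Set (X → ℝ)} (hD : ∀ d ∈ D, Dist1 d) {ε : ℝ} (hε : 0 < ε) :
    ∃ C : Finset (X → ℝ), IsCover (PMF.uniformOfFinset (univ.image x) hne) D (allPred X) ε C := by
  classical
  set m := ⌈1 / ε⌉₊
  have hm : (0 : ℝ) < m := Nat.cast_pos.2 (Nat.ceil_pos.2 (by positivity))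
  have hmε : 1 / (m : ℝ) ≤ ε := by
    rw [div_le_iff₀ hm, ← div_le_iff₀' hε]
    exact Nat.le_ceil _
  set grid : (Fin n → Fin (m + 1)) → X → ℝ := fun v => Function.extend x (fun i => (v i : ℝ) / m) 0
  refine ⟨univ.image grid, ?_, fun p hp => ?_⟩
  · simp only [coe_image, coe_univ, Set.image_univ, Set.range_subset_iff]
    exact fun v => extend_mem_allPred x fun i =>
      ⟨by positivity, div_le_one_of_le₀ (by exact_mod_cast Fin.is_le (v i)) hm.le⟩
  have hfloor (i : Fin n) : ⌊p (x i) * m⌋₊ < m + 1 :=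
    Nat.lt_succ_of_le (Nat.floor_le_of_le (mul_le_of_le_one_left hm.le (hp (x i)).2))
  refine ⟨grid fun i => ⟨_, hfloor i⟩, by simp,
    (dnorm_uniformOfFinset_image_le hinj hne hD _).trans (div_le_of_le_mul₀ n.cast_nonneg hε.le ?_)⟩
  calc ∑ i, |(p - grid fun i => ⟨_, hfloor i⟩) (x i)| ≤ ∑ _i : Fin n, ε := by
        refine sum_le_sum fun i _ => ?_
        simp only [grid, Pi.sub_apply, hinj.extend_apply]
        exact (abs_sub_natFloor_mul_div_le (hp (x i)).1 hm).trans hmε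
    _ = ε * n := by rw [sum_const, card_univ, Fintype.card_fin, nsmul_eq_mul, mul_comm]

theorem pow_le_card_of_isCover {D : Set (X → ℝ)} (hD : ∀ d ∈ D, Dist1 d) {ε : ℝ} (hε : 0 < ε)
    (hx : Shatters D (6 * ε) x) {C : Finset (X → ℝ)}
    (hC : IsCover (PMF.uniformOfFinset (univ.image x) hne) D (allPred X) ε C) :
    (72 / 65 : ℝ) ^ n ≤ #C := by
  classical
  set grid : (Fin n → Fin 4) → X → ℝ :=
    fun v => Function.extend x (fun i => ((v i : ℕ) : ℝ) / 3) 0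
  have hgrid (v : Fin n → Fin 4) : grid v ∈ allPred X :=
    extend_mem_allPred x fun i =>
      ⟨by positivity, div_le_one_of_le₀ (by exact_mod_cast Fin.is_le (v i)) (by norm_num)⟩
  choose c hcC hc using fun v => hC.2 (grid v) (hgrid v)
  have hball (v : Fin n → Fin 4) : ∑ i, |((v i : ℕ) : ℝ) / 3 - c v (x i)| ≤ n / 6 := by
    have := hx.mul_sum_abs_le_of_dnorm_le hinj hne hD (hc v)
    simp only [grid, Pi.sub_apply, hinj.extend_apply] at this
    rw [le_div_iff₀ (by norm_num)]
    nlinarith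
  have hfiber (c₀ : X → ℝ) : (#{v | c v = c₀} : ℝ) ≤ (65 / 18) ^ n := by
    refine le_trans ?_ (card_filter_sum_abs_sub_le (c₀ ∘ x))
    exact_mod_cast card_le_card fun v hv => by
      simp only [mem_filter, mem_univ, true_and] at hv ⊢
      exact hv ▸ hball v
  have hcount : (4 : ℝ) ^ n ≤ #C * (65 / 18) ^ n :=
    calc (4 : ℝ) ^ n = #(univ : Finset (Fin n → Fin 4)) := by simp
      _ = ∑ c₀ ∈ C, (#{v | c v = c₀} : ℝ) := by
          exact_mod_cast card_eq_sum_card_fiberwise fun v _ => hcC v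
      _ ≤ #C * (65 / 18) ^ n := by
          rw [← nsmul_eq_mul, ← sum_const]
          exact sum_le_sum fun c₀ _ => hfiber c₀
  rwa [show (72 / 65 : ℝ) = 4 / (65 / 18) by norm_num, div_pow, div_le_iff₀ (by positivity)]

end UniformImage

theorem div_eight_le_logb_of_pow_le {n N : ℕ} (h : (72 / 65 : ℝ) ^ n ≤ N) :
    (n : ℝ) / 8 ≤ Real.logb 2 N := by
  have hbase : (8 : ℝ)⁻¹ ≤ Real.logb 2 (72 / 65) := by
    rw [Real.le_logb_iff_rpow_le one_lt_two (by norm_num),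
      Real.rpow_inv_le_iff_of_pos (by norm_num) (by norm_num) (by norm_num)]
    norm_num
  calc (n : ℝ) / 8 ≤ n * Real.logb 2 (72 / 65) := by rw [div_eq_mul_inv]; gcongr
    _ = Real.logb 2 ((72 / 65) ^ n) := (Real.logb_pow _ _ _).symm
    _ ≤ Real.logb 2 N := Real.logb_le_logb_of_le one_lt_two (by positivity) h

end OI

theorem statement_12_general {X : Type} [DecidableEq X] (D : Set (X → ℝ))
    (hD : ∀ d ∈ D, Dist1 d) (ε : ℝ) (hε : 0 < ε)
    (n : ℕ) (hn : 0 < n) (x : Fin n → X) (hx : Shatters D (6 * ε) x) :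
    (n : ℝ) / 8 ≤
      elog2 (covN (PMF.uniformOfFinset (Finset.image x Finset.univ)
          ⟨x ⟨0, hn⟩, Finset.mem_image_of_mem x (Finset.mem_univ _)⟩)
        D (allPred X) ε) := by
  have hinj : Function.Injective x := hx.injective (by positivity)
  have hne : (univ.image x).Nonempty := ⟨x ⟨0, hn⟩, mem_image_of_mem x (mem_univ _)⟩
  obtain ⟨C₀, hC₀⟩ := exists_finset_isCover hinj hne hD hε
  obtain ⟨C, hC, hCN⟩ := exists_isCover_encard_eq_covN ⟨_, hC₀⟩
  have hCfin : C.Finite := Set.finite_of_encard_le_coe <|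
    hCN ▸ (covN_le_encard hC₀).trans_eq (Set.encard_coe_eq_coe_finsetCard C₀)
  have hpack := pow_le_card_of_isCover hinj hne hD hε hx (C := hCfin.toFinset)
    (by rwa [hCfin.coe_toFinset])
  rw [elog2, ← hCN, ← Set.ncard_def, Set.ncard_eq_toFinset_card C hCfin]
  exact div_eight_le_logb_of_pow_le hpack

/-- if `x₁,…,x_n` are `6ε`-fat shattered by `D` and `μ` is uniform over
`{x₁,…,x_n}`, then `log N_{μ,D}([0,1]^X, ε) ≥ n/8`. -/
theorem statement_12 {X : Type} [Nonempty X] [DecidableEq X] (D : Set (X → ℝ))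
    (hDne : D.Nonempty) (hD : ∀ d ∈ D, Dist1 d) (ε : ℝ) (hε : 0 < ε)
    (n : ℕ) (hn : 0 < n) (x : Fin n → X) (hx : Shatters D (6 * ε) x) :
    (n : ℝ) / 8 ≤
      elog2 (covN (PMF.uniformOfFinset (Finset.image x Finset.univ)
          ⟨x ⟨0, hn⟩, Finset.mem_image_of_mem x (Finset.mem_univ _)⟩)
        D (allPred X) ε) :=
  statement_12_general D hD ε hε n hn x hx
end
end
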